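/- arXiv:2605.01972 — 2 statements merged into one kernel-verified Lean document; each statement's English description precedes it below -/
import Mathlib

section
/- Let 1/2 < β < 1 and ψ(x) = x^β. Then for every δ₀ ∈ (0,1) there exist constants 0 < c < C (depending only on β and δ₀) such that for all δ ∈ (0, δ₀] and all x_N, x_T ∈ ℂ with |x_T| ≤ δ^{1/β − 1}·|x_N|: c·δ^{1/(2β) − 1}·|x_N| ≤ κ_{G_ψ}(p_δ; (x_N, x_T)) ≤ C·δ^{1/(2β) − 1}·|x_N|. -/
open Complex Metric Set

/-- The Kobayashi–Royden metric of a domain `Ω ⊆ ℂ²` at point `z` in direction `X`: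
the infimum of `1/λ` over all `λ > 0` admitting a holomorphic map `φ : 𝔻 → Ω`
with `φ 0 = z` and `φ' 0 = λ • X`. -/
noncomputable def kob (Ω : Set (ℂ × ℂ)) (z X : ℂ × ℂ) : ℝ :=
  sInf {c : ℝ | ∃ lam : ℝ, 0 < lam ∧ c = 1 / lam ∧
    ∃ φ : ℂ → ℂ × ℂ, DifferentiableOn ℂ φ (ball (0 : ℂ) 1) ∧
      MapsTo φ (ball (0 : ℂ) 1) Ω ∧ φ 0 = z ∧ deriv φ 0 = lam • X}

/-- The model domain `G_ψ = {z ∈ 𝔻² : Re z₁ < ψ(|z₂|)}`. -/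
def Gpsi (ψ : ℝ → ℝ) : Set (ℂ × ℂ) :=
  {z : ℂ × ℂ | ‖z.1‖ < 1 ∧ ‖z.2‖ < 1 ∧ z.1.re < ψ (‖z.2‖)}

/-- The base point `p_δ = (-δ, 0)`. -/
noncomputable def pdel (δ : ℝ) : ℂ × ℂ := ((-δ : ℂ), 0)

/-!
The upper bound is realised by the explicit disc `ζ ↦ (-δ + λ x_N ζ, λ x_T ζ + ζ²/2)`: its
quadratic second coordinate keeps `|z₂|^β` above `Re z₁` once `|ζ|` exceeds `δ^{1/(2β)}`.

For the lower bound, let `φ` be a disc through `p_δ` with `φ'(0) = λ (x_N, x_T)` and put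
`s = δ^{1/(2β)}`, `t = λ |x_N| δ^{1/(2β) - 1}`. The Schwarz lemma applied to `φ₂(ζ)/ζ` gives
`|φ₂(ζ)| ≤ (|φ₂'(0)| + 2|ζ|)|ζ|`, so `Re φ₁ ≤ (t + 2)^β δ` on the disc of radius `s`, and the
Borel–Carathéodory inequality for `φ₁'(0)` on that disc yields `t ≤ 2((t + 2)^β + 1)`. Since
`β < 1`, this bounds `t` by a constant depending only on `β`.
-/

open Filter Topology

namespace Complex

theorem norm_deriv_le_of_re_le {f : ℂ → ℂ} {R M : ℝ} (hR : 0 < R)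
    (hf : DifferentiableOn ℂ f (ball 0 R)) (hM : ∀ z ∈ ball 0 R, (f z).re ≤ M)
    (hM0 : (f 0).re < M) : ‖deriv f 0‖ ≤ 2 * (M - (f 0).re) / R := by
  set M' := M - (f 0).re
  have hbound (z : ℂ) (hz : z ∈ ball 0 R) : ‖f z - f 0‖ ≤ 2 * M' * ‖z‖ / (R - ‖z‖) :=
    borelCaratheodory_zero (sub_pos.2 hM0) (hf.sub_const _)
      (fun w hw => by simpa using hM w hw) hR hz (sub_self _)
  have hslope : Tendsto (fun z => ‖dslope f 0 z‖) (𝓝[≠] 0) (𝓝 ‖deriv f 0‖) := by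
    rw [← dslope_same]
    exact (continuousAt_dslope_same.2 (hf.differentiableAt (ball_mem_nhds 0 hR))).norm.tendsto
      |>.mono_left nhdsWithin_le_nhds
  have hrhs : Tendsto (fun z : ℂ => 2 * M' / (R - ‖z‖)) (𝓝[≠] 0) (𝓝 (2 * M' / R)) := by
    have : ContinuousAt (fun z : ℂ => 2 * M' / (R - ‖z‖)) 0 :=
      continuousAt_const.div (by fun_prop) (by simp [hR.ne'])
    simpa using this.tendsto.mono_left nhdsWithin_le_nhds
  refine le_of_tendsto_of_tendsto hslope hrhs ?_
  filter_upwards [self_mem_nhdsWithin, nhdsWithin_le_nhds (ball_mem_nhds 0 hR)] with z hz0 hzR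
  rw [dslope_of_ne _ hz0, slope_def_module, norm_smul, norm_inv, sub_zero,
    inv_mul_le_iff₀ (norm_pos_iff.2 hz0)]
  calc ‖f z - f 0‖ ≤ 2 * M' * ‖z‖ / (R - ‖z‖) := hbound z hzR
    _ = ‖z‖ * (2 * M' / (R - ‖z‖)) := by ring

theorem norm_le_of_mapsTo_unitBall {f : ℂ → ℂ} (hd : DifferentiableOn ℂ f (ball 0 1))
    (hmaps : MapsTo f (ball 0 1) (closedBall 0 1)) (h0 : f 0 = 0) {z : ℂ} (hz : z ∈ ball 0 1) :
    ‖f z‖ ≤ (‖deriv f 0‖ + 2 * ‖z‖) * ‖z‖ := by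
  have hslope (w : ℂ) (hw : w ∈ ball 0 1) : ‖dslope f 0 w‖ ≤ 1 := by
    simpa using norm_dslope_le_div_of_mapsTo_ball hd (by rwa [h0]) hw
  have hslope_maps : MapsTo (dslope f 0) (ball 0 1) (closedBall (dslope f 0 0) 2) := by
    intro w hw
    rw [mem_closedBall, dist_eq_norm]
    linarith [norm_sub_le (dslope f 0 w) (dslope f 0 0), hslope w hw,
      hslope 0 (mem_ball_self one_pos)]
  have hschwarz := dist_le_div_mul_dist_of_mapsTo_ball
    ((differentiableOn_dslope (ball_mem_nhds 0 one_pos)).2 hd) hslope_maps hz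
  rw [dslope_same, dist_zero_right, div_one, dist_eq_norm] at hschwarz
  calc ‖f z‖ = ‖z‖ * ‖dslope f 0 z‖ := by
        have := sub_smul_dslope f 0 z
        rw [sub_zero, h0, sub_zero] at this
        rw [← norm_smul, this]
    _ ≤ ‖z‖ * (‖deriv f 0‖ + 2 * ‖z‖) := by
        gcongr
        linarith [norm_le_insert' (dslope f 0 z) (deriv f 0)]
    _ = (‖deriv f 0‖ + 2 * ‖z‖) * ‖z‖ := mul_comm _ _

end Complex

theorem Real.le_rpow_inv_one_sub_of_le_mul_rpow {u K β : ℝ} (hu : 0 < u) (hβ : β < 1)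
    (h : u ≤ K * u ^ β) : u ≤ K ^ (1 - β)⁻¹ := by
  have huβ : 0 < u ^ β := Real.rpow_pos_of_pos hu β
  have hK : 0 ≤ K := by
    by_contra! hK
    nlinarith
  rw [Real.le_rpow_inv_iff_of_pos hu.le hK (sub_pos.2 hβ), Real.rpow_sub hu, Real.rpow_one,
    div_le_iff₀ huβ]
  exact h

def IsTangentDisc (Ω : Set (ℂ × ℂ)) (z X : ℂ × ℂ) (lam : ℝ) (φ : ℂ → ℂ × ℂ) : Prop :=
  DifferentiableOn ℂ φ (ball (0 : ℂ) 1) ∧ MapsTo φ (ball (0 : ℂ) 1) Ω ∧ φ 0 = z ∧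
    deriv φ 0 = lam • X

section Kobayashi

variable {Ω : Set (ℂ × ℂ)} {z X : ℂ × ℂ}

lemma IsTangentDisc.hasDerivAt {lam : ℝ} {φ : ℂ → ℂ × ℂ} (hφ : IsTangentDisc Ω z X lam φ) :
    HasDerivAt φ (lam • X) 0 :=
  hφ.2.2.2 ▸ (hφ.1.differentiableAt (ball_mem_nhds 0 one_pos)).hasDerivAt

lemma bddBelow_kob_set :
    BddBelow {c : ℝ | ∃ lam : ℝ, 0 < lam ∧ c = 1 / lam ∧ ∃ φ, IsTangentDisc Ω z X lam φ} :=
  ⟨0, by rintro _ ⟨lam, hlam, rfl, -⟩; positivity⟩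

lemma kob_le_one_div {lam : ℝ} {φ : ℂ → ℂ × ℂ} (hlam : 0 < lam)
    (hφ : IsTangentDisc Ω z X lam φ) : kob Ω z X ≤ 1 / lam :=
  csInf_le bddBelow_kob_set ⟨lam, hlam, rfl, φ, hφ⟩

lemma le_kob {c lam : ℝ} {φ : ℂ → ℂ × ℂ} (hlam : 0 < lam) (hφ : IsTangentDisc Ω z X lam φ)
    (h : ∀ lam' φ', 0 < lam' → IsTangentDisc Ω z X lam' φ' → c * lam' ≤ 1) :
    c ≤ kob Ω z X :=
  le_csInf ⟨_, lam, hlam, rfl, φ, hφ⟩ <| by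
    rintro _ ⟨lam', hlam', rfl, φ', hφ'⟩
    rw [le_div_iff₀ hlam']
    exact h lam' φ' hlam' hφ'

lemma kob_zero (hz : z ∈ Ω) : kob Ω z 0 = 0 := by
  have hconst (lam : ℝ) : IsTangentDisc Ω z 0 lam fun _ => z :=
    ⟨differentiableOn_const z, fun _ _ => hz, rfl, by simp⟩
  refine le_antisymm (le_of_forall_pos_le_add fun ε hε => ?_) ?_
  · simpa using kob_le_one_div (one_div_pos.2 hε) (hconst (1 / ε))
  · exact Real.sInf_nonneg <| by rintro _ ⟨lam, hlam, rfl, -⟩; positivity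

end Kobayashi

lemma pdel_mem_Gpsi {ψ : ℝ → ℝ} {δ : ℝ} (hδ0 : 0 < δ) (hδ1 : δ < 1) (hψ : 0 ≤ ψ 0) :
    pdel δ ∈ Gpsi ψ := by
  refine ⟨?_, ?_, ?_⟩ <;> simp [pdel, abs_of_pos hδ0, hδ1]
  linarith

lemma re_fst_lt_of_mapsTo_Gpsi {ψ : ℝ → ℝ} (hψ : MonotoneOn ψ (Ici 0)) {φ : ℂ → ℂ × ℂ}
    (hd : DifferentiableOn ℂ φ (ball 0 1)) (hmaps : MapsTo φ (ball 0 1) (Gpsi ψ))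
    (h0 : (φ 0).2 = 0) {z : ℂ} (hz : z ∈ ball 0 1) :
    (φ z).1.re < ψ ((‖deriv (fun w => (φ w).2) 0‖ + 2 * ‖z‖) * ‖z‖) := by
  have hsnd : MapsTo (fun w => (φ w).2) (ball 0 1) (closedBall 0 1) := fun w hw => by
    simpa using (hmaps hw).2.1.le
  calc (φ z).1.re < ψ ‖(φ z).2‖ := (hmaps hz).2.2
    _ ≤ ψ ((‖deriv (fun w => (φ w).2) 0‖ + 2 * ‖z‖) * ‖z‖) :=
      hψ (mem_Ici.2 (norm_nonneg _)) (mem_Ici.2 (by positivity))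
        (Complex.norm_le_of_mapsTo_unitBall hd.snd hsnd h0 hz)

lemma re_fst_le_rpow_of_mapsTo_Gpsi {β s a : ℝ} (hβ : 0 ≤ β) (hs1 : s ≤ 1) {φ : ℂ → ℂ × ℂ}
    (hd : DifferentiableOn ℂ φ (ball 0 1)) (hmaps : MapsTo φ (ball 0 1) (Gpsi fun x => x ^ β))
    (h0 : (φ 0).2 = 0) (ha : ‖deriv (fun w => (φ w).2) 0‖ ≤ a * s) {z : ℂ} (hz : z ∈ ball 0 s) :
    (φ z).1.re ≤ (a + 2) ^ β * s ^ (2 * β) := by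
  have hz' : ‖z‖ < s := mem_ball_zero_iff.1 hz
  have hs0 : 0 < s := (norm_nonneg z).trans_lt hz'
  have ha0 : 0 ≤ a := nonneg_of_mul_nonneg_left ((norm_nonneg _).trans ha) hs0
  have hquad : (‖deriv (fun w => (φ w).2) 0‖ + 2 * ‖z‖) * ‖z‖ ≤ (a + 2) * s ^ 2 :=
    calc _ ≤ (a * s + 2 * s) * s := by gcongr
      _ = (a + 2) * s ^ 2 := by ring
  calc (φ z).1.re ≤ ((‖deriv (fun w => (φ w).2) 0‖ + 2 * ‖z‖) * ‖z‖) ^ β :=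
        (re_fst_lt_of_mapsTo_Gpsi (Real.monotoneOn_rpow_Ici_of_exponent_nonneg hβ) hd hmaps h0
          (ball_subset_ball hs1 hz)).le
    _ ≤ ((a + 2) * s ^ 2) ^ β := by gcongr
    _ = (a + 2) ^ β * s ^ (2 * β) := by
      rw [Real.mul_rpow (by positivity) (by positivity), ← Real.rpow_natCast,
        ← Real.rpow_mul hs0.le]
      norm_num

lemma mul_norm_mul_rpow_le_of_isTangentDisc {β s lam : ℝ} (hβ0 : 0 < β) (hβ1 : β < 1)
    (hs0 : 0 < s) (hs1 : s ≤ 1) {xN xT : ℂ} (hxT : ‖xT‖ ≤ s ^ (2 - 2 * β) * ‖xN‖)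
    (hlam : 0 < lam) {φ : ℂ → ℂ × ℂ}
    (hφ : IsTangentDisc (Gpsi fun x => x ^ β) (pdel (s ^ (2 * β))) (xN, xT) lam φ) :
    lam * ‖xN‖ * s ^ (1 - 2 * β) ≤ 6 ^ (1 - β)⁻¹ := by
  have hφ' := hφ.hasDerivAt
  obtain ⟨hd, hmaps, h0, -⟩ := hφ
  set t := lam * ‖xN‖ * s ^ (1 - 2 * β)
  have ht : 0 ≤ t := by positivity
  have hsβ : 0 < s ^ (2 * β) := Real.rpow_pos_of_pos hs0 _
  have hderiv₁ : HasDerivAt (fun w => (φ w).1) (lam • xN) 0 :=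
    (hasFDerivAt_fst (𝕜 := ℂ) (p := φ 0)).comp_hasDerivAt 0 hφ'
  have hderiv₂ : HasDerivAt (fun w => (φ w).2) (lam • xT) 0 :=
    (hasFDerivAt_snd (𝕜 := ℂ) (p := φ 0)).comp_hasDerivAt 0 hφ'
  have hslope₂ : ‖deriv (fun w => (φ w).2) 0‖ ≤ t * s :=
    calc ‖deriv (fun w => (φ w).2) 0‖ = lam * ‖xT‖ := by
          rw [hderiv₂.deriv, norm_smul, Real.norm_eq_abs, abs_of_pos hlam]
      _ ≤ lam * (s ^ (2 - 2 * β) * ‖xN‖) := by gcongr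
      _ = t * s := by
        rw [show 2 - 2 * β = 1 - 2 * β + 1 by ring, Real.rpow_add_one hs0.ne']; ring
  have hre0 : (φ 0).1.re = -s ^ (2 * β) := by simp [h0, pdel]
  have hre0_lt : (φ 0).1.re < (t + 2) ^ β * s ^ (2 * β) := by
    rw [hre0]; linarith [mul_pos (Real.rpow_pos_of_pos (by linarith : 0 < t + 2) β) hsβ]
  have hBC := Complex.norm_deriv_le_of_re_le hs0 (hd.fst.mono (ball_subset_ball hs1))
    (fun z hz => re_fst_le_rpow_of_mapsTo_Gpsi hβ0.le hs1 hd hmaps (by simp [h0, pdel])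
      hslope₂ hz) hre0_lt
  have hts : lam * ‖xN‖ * s = t * s ^ (2 * β) := by
    simp only [t]; rw [mul_assoc _ (s ^ (1 - 2 * β)), ← Real.rpow_add hs0]; norm_num
  rw [hderiv₁.deriv, hre0, norm_smul, Real.norm_eq_abs, abs_of_pos hlam, le_div_iff₀ hs0, hts]
    at hBC
  have hpow : 1 ≤ (t + 2) ^ β := Real.one_le_rpow (by linarith) hβ0.le
  have hkey : t + 2 ≤ 6 * (t + 2) ^ β := by
    have : t ≤ 2 * ((t + 2) ^ β + 1) := by nlinarith
    linarith
  linarith [Real.le_rpow_inv_one_sub_of_le_mul_rpow (by linarith) hβ1 hkey]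

lemma neg_rpow_add_lt_rpow {β s c t u : ℝ} (hβ0 : 1 / 2 ≤ β) (hβ1 : β ≤ 1) (hs : 0 < s)
    (hc0 : 0 ≤ c) (hc : c ≤ 1 / 4) (ht : 0 ≤ t) (hu0 : 0 ≤ u) (hu : t ^ 2 / 2 - c * s * t ≤ u) :
    -s ^ (2 * β) + c * s ^ (2 * β - 1) * t < u ^ β := by
  have hsβ : 0 < s ^ (2 * β) := Real.rpow_pos_of_pos hs _
  rcases le_or_gt t s with hts | hst
  · have : c * s ^ (2 * β - 1) * t ≤ c * s ^ (2 * β) := by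
      calc c * s ^ (2 * β - 1) * t ≤ c * s ^ (2 * β - 1) * s := by gcongr
        _ = c * s ^ (2 * β) := by rw [mul_assoc, ← Real.rpow_add_one hs.ne']; norm_num
    nlinarith [Real.rpow_nonneg hu0 β]
  · have htpos : 0 < t := hs.trans hst
    have hcs : c * s ≤ 1 / 4 * t := mul_le_mul hc hst.le hs.le (by norm_num)
    have hu' : t ^ 2 / 4 ≤ u := by nlinarith
    have h4β : (4 : ℝ) ^ β ≤ 4 := by
      simpa using Real.rpow_le_rpow_of_exponent_le (by norm_num : (1 : ℝ) ≤ 4) hβ1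
    calc -s ^ (2 * β) + c * s ^ (2 * β - 1) * t < c * s ^ (2 * β - 1) * t := by linarith
      _ ≤ 1 / 4 * t ^ (2 * β - 1) * t := by
        gcongr
        linarith
      _ = t ^ (2 * β) / 4 := by rw [mul_assoc, ← Real.rpow_add_one htpos.ne']; ring_nf
      _ ≤ t ^ (2 * β) / 4 ^ β := by gcongr
      _ = (t ^ 2 / 4) ^ β := by
        rw [Real.div_rpow (by positivity) (by norm_num), ← Real.rpow_natCast,
          ← Real.rpow_mul ht]
        norm_num
      _ ≤ u ^ β := by gcongr

lemma mem_Gpsi_rpow_of_norm_le {β s c : ℝ} (hβ0 : 1 / 2 ≤ β) (hβ1 : β ≤ 1) (hs0 : 0 < s)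
    (hs1 : s ≤ 1) (hc0 : 0 < c) (hc : c ≤ 1 / 4) (hsc : s ^ (2 * β) + c < 1) {w₁ w₂ ζ : ℂ}
    (hw₁ : ‖w₁‖ = c * s ^ (2 * β - 1)) (hw₂ : ‖w₂‖ ≤ c * s) (hζ : ‖ζ‖ < 1) :
    (-((s ^ (2 * β) : ℝ) : ℂ) + w₁ * ζ, w₂ * ζ + ζ ^ 2 / 2) ∈ Gpsi fun x => x ^ β := by
  have h₁ : ‖w₁ * ζ‖ = c * s ^ (2 * β - 1) * ‖ζ‖ := by rw [norm_mul, hw₁]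
  have h₂ : ‖w₂ * ζ‖ ≤ c * s * ‖ζ‖ := by rw [norm_mul]; gcongr
  have h₃ : ‖ζ ^ 2 / 2‖ = ‖ζ‖ ^ 2 / 2 := by simp
  have hζc : c * s ^ (2 * β - 1) * ‖ζ‖ ≤ c := by
    calc c * s ^ (2 * β - 1) * ‖ζ‖ ≤ c * 1 * 1 := by
          gcongr; exact Real.rpow_le_one hs0.le hs1 (by linarith)
      _ = c := by ring
  have hζ₂ : ‖ζ‖ ^ 2 / 2 - c * s * ‖ζ‖ ≤ ‖w₂ * ζ + ζ ^ 2 / 2‖ := by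
    have := norm_sub_norm_le (ζ ^ 2 / 2) (-(w₂ * ζ))
    rw [sub_neg_eq_add, norm_neg, add_comm, h₃] at this
    linarith
  have hcs : c * s ≤ 1 / 4 := by nlinarith
  refine ⟨?_, ?_, ?_⟩
  · calc ‖-((s ^ (2 * β) : ℝ) : ℂ) + w₁ * ζ‖ ≤ ‖-((s ^ (2 * β) : ℝ) : ℂ)‖ + ‖w₁ * ζ‖ :=
          norm_add_le _ _
      _ = s ^ (2 * β) + c * s ^ (2 * β - 1) * ‖ζ‖ := by
        rw [norm_neg, norm_real, Real.norm_of_nonneg (by positivity), h₁]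
      _ < 1 := by linarith
  · calc ‖w₂ * ζ + ζ ^ 2 / 2‖ ≤ c * s * ‖ζ‖ + ‖ζ‖ ^ 2 / 2 :=
          (norm_add_le _ _).trans (by rw [h₃]; linarith)
      _ < 1 := by nlinarith [norm_nonneg ζ]
  · calc (-((s ^ (2 * β) : ℝ) : ℂ) + w₁ * ζ).re
        ≤ -s ^ (2 * β) + c * s ^ (2 * β - 1) * ‖ζ‖ := by
          simpa [← h₁] using re_le_norm (w₁ * ζ)
      _ < ‖w₂ * ζ + ζ ^ 2 / 2‖ ^ β :=
        neg_rpow_add_lt_rpow hβ0 hβ1 hs0 hc0.le hc (norm_nonneg _) (norm_nonneg _) hζ₂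

lemma exists_isTangentDisc_Gpsi {β s c : ℝ} (hβ0 : 1 / 2 ≤ β) (hβ1 : β ≤ 1) (hs0 : 0 < s)
    (hs1 : s ≤ 1) (hc0 : 0 < c) (hc : c ≤ 1 / 4) (hsc : s ^ (2 * β) + c < 1) {xN xT : ℂ}
    (hxN : xN ≠ 0) (hxT : ‖xT‖ ≤ s ^ (2 - 2 * β) * ‖xN‖) :
    ∃ φ, IsTangentDisc (Gpsi fun x => x ^ β) (pdel (s ^ (2 * β))) (xN, xT)
      (c * s ^ (2 * β - 1) / ‖xN‖) φ := by
  set lam := c * s ^ (2 * β - 1) / ‖xN‖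
  have hxN' : 0 < ‖xN‖ := norm_pos_iff.2 hxN
  have hlam : 0 < lam := by positivity
  have hN : lam * ‖xN‖ = c * s ^ (2 * β - 1) := div_mul_cancel₀ _ hxN'.ne'
  have hT : lam * ‖xT‖ ≤ c * s := by
    calc lam * ‖xT‖ ≤ lam * (s ^ (2 - 2 * β) * ‖xN‖) := by gcongr
      _ = lam * ‖xN‖ * s ^ (2 - 2 * β) := by ring
      _ = c * (s ^ (2 * β - 1) * s ^ (2 - 2 * β)) := by rw [hN]; ring
      _ = c * s := by rw [← Real.rpow_add hs0]; norm_num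
  have hnorm (w : ℂ) : ‖(lam : ℂ) * w‖ = lam * ‖w‖ := by
    rw [norm_mul, norm_real, Real.norm_of_nonneg hlam.le]
  refine ⟨fun ζ => (-((s ^ (2 * β) : ℝ) : ℂ) + lam * xN * ζ, lam * xT * ζ + ζ ^ 2 / 2),
    Differentiable.differentiableOn (by fun_prop), fun ζ hζ => ?_, by simp [pdel], ?_⟩
  · exact mem_Gpsi_rpow_of_norm_le hβ0 hβ1 hs0 hs1 hc0 hc hsc ((hnorm xN).trans hN)
      ((hnorm xT).trans_le hT) (mem_ball_zero_iff.1 hζ)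
  · have h₁ : HasDerivAt (fun ζ : ℂ => -((s ^ (2 * β) : ℝ) : ℂ) + lam * xN * ζ) (lam * xN) 0 := by
      simpa using ((hasDerivAt_id (0 : ℂ)).const_mul ((lam : ℂ) * xN)).const_add
        (-((s ^ (2 * β) : ℝ) : ℂ))
    have h₂ : HasDerivAt (fun ζ : ℂ => lam * xT * ζ + ζ ^ 2 / 2) (lam * xT) 0 := by
      simpa using ((hasDerivAt_id (0 : ℂ)).const_mul ((lam : ℂ) * xT)).fun_add
        ((hasDerivAt_pow 2 (0 : ℂ)).div_const 2)
    rw [(h₁.prodMk h₂).deriv]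
    ext <;> simp [real_smul]

/-- for `ψ(x) = x^β`, `1/2 < β < 1`, in the normal zone
`|x_T| ≤ δ^{1/β−1}|x_N|` the metric is comparable to `δ^{1/(2β)−1}|x_N|`. -/
theorem stmt9 (β : ℝ) (hβ0 : 1 / 2 < β) (hβ1 : β < 1) :
    ∀ δ₀ ∈ Ioo (0 : ℝ) 1, ∃ c C : ℝ, 0 < c ∧ c < C ∧
      ∀ δ ∈ Ioc (0 : ℝ) δ₀, ∀ xN xT : ℂ,
        ‖xT‖ ≤ δ ^ (1 / β - 1) * ‖xN‖ →
        c * δ ^ (1 / (2 * β) - 1) * ‖xN‖ ≤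
            kob (Gpsi (fun x => x ^ β)) (pdel δ) (xN, xT) ∧
        kob (Gpsi (fun x => x ^ β)) (pdel δ) (xN, xT) ≤
            C * δ ^ (1 / (2 * β) - 1) * ‖xN‖ := by
  rintro δ₀ ⟨hδ₀0, hδ₀1⟩
  have hK : 1 ≤ (6 : ℝ) ^ (1 - β)⁻¹ := Real.one_le_rpow (by norm_num) (by simp; linarith)
  refine ⟨((6 : ℝ) ^ (1 - β)⁻¹)⁻¹, ((1 - δ₀) / 4)⁻¹, by positivity,
    (inv_le_one_of_one_le₀ hK).trans_lt (one_lt_inv₀ (by linarith) |>.2 (by linarith)), ?_⟩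
  rintro δ ⟨hδ0, hδδ₀⟩ xN xT hxT
  obtain ⟨s, hs0, hs1, rfl⟩ : ∃ s, 0 < s ∧ s < 1 ∧ δ = s ^ (2 * β) :=
    ⟨δ ^ (2 * β)⁻¹, by positivity, Real.rpow_lt_one hδ0.le (by linarith) (by positivity),
      (Real.rpow_inv_rpow hδ0.le (by positivity)).symm⟩
  have hβ : β ≠ 0 := by linarith
  rw [← Real.rpow_mul hs0.le, show 2 * β * (1 / β - 1) = 2 - 2 * β by field_simp] at hxT
  rw [← Real.rpow_mul hs0.le, show 2 * β * (1 / (2 * β) - 1) = 1 - 2 * β by field_simp]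
  rcases eq_or_ne xN 0 with rfl | hxN
  · obtain rfl : xT = 0 := by simpa using hxT
    rw [Prod.mk_zero_zero, kob_zero (pdel_mem_Gpsi (ψ := fun x => x ^ β) hδ0 (by linarith)
      (Real.rpow_nonneg le_rfl β))]
    simp
  obtain ⟨φ, hφ⟩ := exists_isTangentDisc_Gpsi hβ0.le hβ1.le hs0 hs1.le (c := (1 - δ₀) / 4)
    (by linarith) (by linarith) (by linarith) hxN hxT
  have hlam : 0 < (1 - δ₀) / 4 * s ^ (2 * β - 1) / ‖xN‖ := by positivity
  constructor
  · refine le_kob hlam hφ fun lam ψ hlam' hψ => ?_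
    have := mul_norm_mul_rpow_le_of_isTangentDisc (by linarith) hβ1 hs0 hs1.le hxT hlam' hψ
    calc _ = ((6 : ℝ) ^ (1 - β)⁻¹)⁻¹ * (lam * ‖xN‖ * s ^ (1 - 2 * β)) := by ring
      _ ≤ 1 := inv_mul_le_one_of_le₀ this (by positivity)
  · calc _ ≤ 1 / ((1 - δ₀) / 4 * s ^ (2 * β - 1) / ‖xN‖) := kob_le_one_div hlam hφ
      _ = _ := by
        rw [show 1 - 2 * β = -(2 * β - 1) by ring, Real.rpow_neg hs0.le]
        field_simp
end

section
/- Let β > 1 and ψ(x) = x^β. Then for every δ₀ ∈ (0,1) there exists C > 0 (depending only on β and δ₀) such that for all δ ∈ (0, δ₀] and all x_N, x_T ∈ ℂ with |x_T| ≤ (1/8)·δ^{1/β − 1}·|x_N|: (1/(4√2))·δ^{1/(2β) − 1}·|x_N| ≤ κ_{G_ψ}(p_δ; (x_N, x_T)) ≤ C·δ^{1/(2β) − 1}·|x_N|. -/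
/-!
Lower bound: let `φ` be an analytic disc through `p_δ` with `φ'(0) = λ (x_N, x_T)`, and put
`a = λ |x_T|`. By Schwarz–Pick, `|φ₂(ζ)| ≤ |ζ| (a + |ζ|)`, so on the disc of radius `r` with
`r (a + r) = δ^{1/β}` the first coordinate stays in the half-plane `Re z₁ < δ`, and the Schwarz
lemma for half-planes gives `λ |x_N| ≤ 4δ / r`. In the zone `|x_T| ≤ δ^{1/β - 1} |x_N| / 8` this
forces `a r ≤ δ^{1/β} / 2`, hence `r² ≥ δ^{1/β} / 2`, i.e. `λ |x_N| ≤ 4√2 δ^{1 - 1/(2β)}`.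

Upper bound: the disc `ζ ↦ (-δ + u ζ, v ζ + ζ² / 4)` with `|u| ≍ δ^{1 - 1/(2β)}` lies in `G_ψ`:
`Re z₁` can only become nonnegative where `|ζ| ≥ 4 δ^{1/(2β)}`, and there
`|z₂|^β ≥ (|ζ| / 4)^{2β}` dominates `|u| |ζ|`.
-/
open Complex Metric Set

open ComplexConjugate

namespace Complex

theorem normSq_one_sub_conj_mul_sub_normSq_sub (u v : ℂ) :
    normSq (1 - conj v * u) - normSq (u - v) = (1 - normSq u) * (1 - normSq v) := by
  simp only [normSq_apply, sub_re, sub_im, mul_re, mul_im, conj_re, conj_im, one_re, one_im]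
  ring

theorem norm_sub_le_norm_one_sub_conj_mul {u v : ℂ} (hu : ‖u‖ ≤ 1) (hv : ‖v‖ ≤ 1) :
    ‖u - v‖ ≤ ‖1 - conj v * u‖ := by
  have key := normSq_one_sub_conj_mul_sub_normSq_sub u v
  rw [← sq_le_sq₀ (norm_nonneg _) (norm_nonneg _)]
  simp only [← Complex.sq_norm] at key
  nlinarith [mul_nonneg (sub_nonneg.2 (pow_le_one₀ (n := 2) (norm_nonneg u) hu))
    (sub_nonneg.2 (pow_le_one₀ (n := 2) (norm_nonneg v) hv))]

/-- The **Schwarz–Pick lemma**, at the centre of the unit disc. -/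
theorem norm_sub_le_mul_norm_one_sub_conj_mul {g : ℂ → ℂ} (hd : DifferentiableOn ℂ g (ball 0 1))
    (hg : MapsTo g (ball 0 1) (closedBall 0 1)) (h0 : ‖g 0‖ < 1) {z : ℂ} (hz : z ∈ ball 0 1) :
    ‖g z - g 0‖ ≤ ‖z‖ * ‖1 - conj (g 0) * g z‖ := by
  have hle : ∀ w ∈ ball (0 : ℂ) 1, ‖g w‖ ≤ 1 := fun w hw => mem_closedBall_zero_iff.1 (hg hw)
  have hden : ∀ w ∈ ball (0 : ℂ) 1, 1 - conj (g 0) * g w ≠ 0 := by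
    intro w hw h
    have : ‖conj (g 0) * g w‖ < 1 := by
      rw [norm_mul, norm_conj]
      exact (mul_le_of_le_one_right (norm_nonneg _) (hle w hw)).trans_lt h0
    rw [← sub_eq_zero.1 h, norm_one] at this
    exact this.false
  set q : ℂ → ℂ := fun w => (g w - g 0) / (1 - conj (g 0) * g w)
  have hq : ‖q z‖ ≤ ‖z‖ := by
    refine norm_le_norm_of_mapsTo_ball ((hd.sub_const _).div ((differentiableOn_const _).sub
      (hd.const_mul _)) hden) (fun w hw => ?_) (by simp [q]) (mem_ball_zero_iff.1 hz)
    rw [mem_closedBall_zero_iff, norm_div, div_le_one (norm_pos_iff.2 (hden w hw))]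
    exact norm_sub_le_norm_one_sub_conj_mul (hle w hw) (hle 0 (mem_ball_self one_pos))
  rwa [norm_div, div_le_iff₀ (norm_pos_iff.2 (hden z hz))] at hq

theorem norm_le_norm_add_of_norm_sub_le_mul {u v : ℂ} {s : ℝ} (hu : ‖u‖ ≤ 1) (hv : ‖v‖ ≤ 1)
    (hs0 : 0 ≤ s) (hs1 : s < 1) (h : ‖u - v‖ ≤ s * ‖1 - conj v * u‖) : ‖u‖ ≤ ‖v‖ + s := by
  have e₁ : ‖u - v‖ ^ 2 = ‖u‖ ^ 2 + ‖v‖ ^ 2 - 2 * (conj v * u).re := by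
    simp only [Complex.sq_norm, normSq_apply, sub_re, sub_im, mul_re, conj_re, conj_im]
    ring
  have e₂ := normSq_one_sub_conj_mul_sub_normSq_sub u v
  simp only [← Complex.sq_norm] at e₂
  have hre : (conj v * u).re ≤ ‖v‖ * ‖u‖ := by
    simpa only [norm_mul, norm_conj] using re_le_norm (conj v * u)
  have hsq := pow_le_pow_left₀ (norm_nonneg _) h 2
  rw [mul_pow, e₁, eq_add_of_sub_eq e₂, e₁] at hsq
  by_contra! hlt
  have h₁ : 0 < (1 + ‖v‖ * s) * ‖u‖ - (‖v‖ + s) := by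
    nlinarith [mul_nonneg (mul_nonneg (norm_nonneg v) hs0) (norm_nonneg u)]
  have h₂ : 0 < (1 - ‖v‖ * s) * ‖u‖ - (‖v‖ - s) := by
    nlinarith [mul_nonneg hs0 (sub_nonneg.2 (mul_le_one₀ hv (norm_nonneg u) hu))]
  nlinarith [mul_pos h₁ h₂, mul_le_mul_of_nonneg_right hre (by nlinarith : (0 : ℝ) ≤ 1 - s ^ 2)]

theorem norm_le_mul_norm_deriv_add {f : ℂ → ℂ} (hd : DifferentiableOn ℂ f (ball 0 1))
    (hf : MapsTo f (ball 0 1) (ball 0 1)) (h0 : f 0 = 0) {z : ℂ} (hz : z ∈ ball 0 1) :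
    ‖f z‖ ≤ ‖z‖ * (‖deriv f 0‖ + ‖z‖) := by
  set g := dslope f 0
  have hg : MapsTo g (ball 0 1) (closedBall 0 1) := fun w hw => by
    simpa using norm_dslope_le_div_of_mapsTo_ball hd
      (by rw [h0]; exact hf.mono_right ball_subset_closedBall) hw
  have hg0 : g 0 = deriv f 0 := dslope_same f 0
  have hgz : ‖g z‖ ≤ ‖g 0‖ + ‖z‖ := by
    have hle : ∀ w ∈ ball (0 : ℂ) 1, ‖g w‖ ≤ 1 := fun w hw => mem_closedBall_zero_iff.1 (hg hw)
    rcases (hle 0 (mem_ball_self one_pos)).lt_or_eq with h | h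
    · exact norm_le_norm_add_of_norm_sub_le_mul (hle z hz) (hle 0 (mem_ball_self one_pos))
        (norm_nonneg z) (mem_ball_zero_iff.1 hz)
        (norm_sub_le_mul_norm_one_sub_conj_mul
          ((differentiableOn_dslope (ball_mem_nhds 0 one_pos)).2 hd) hg h hz)
    · linarith [hle z hz, norm_nonneg z]
  have hfz : f z = z * g z := by simpa [h0] using (sub_smul_dslope f 0 z).symm
  rw [hfz, norm_mul, ← hg0]
  exact mul_le_mul_of_nonneg_left hgz (norm_nonneg z)

/-- Schwarz lemma for maps into a half-plane, via the Cayley-type map `w ↦ w / (w - 2m)`. -/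
theorem norm_deriv_le_of_re_lt {f : ℂ → ℂ} {c : ℂ} {R M : ℝ}
    (hd : DifferentiableOn ℂ f (ball c R)) (hR : 0 < R) (hre : ∀ z ∈ ball c R, (f z).re < M) :
    ‖deriv f c‖ ≤ 2 * (M - (f c).re) / R := by
  set m := M - (f c).re
  have hm : 0 < m := sub_pos.2 (hre c (mem_ball_self hR))
  set g : ℂ → ℂ := fun z => f z - f c
  have hg : ∀ z ∈ ball c R, (g z).re < m := fun z hz => by
    simp only [g, sub_re]; linarith [hre z hz]
  have hden : ∀ z ∈ ball c R, g z - 2 * m ≠ 0 := fun z hz h => by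
    have := congrArg re h
    simp only [sub_re, mul_re, ofReal_re, ofReal_im, re_ofNat, im_ofNat, zero_re] at this
    linarith [hg z hz]
  have hnorm : ∀ z ∈ ball c R, ‖g z‖ ≤ ‖g z - 2 * m‖ := fun z hz => by
    rw [← sq_le_sq₀ (norm_nonneg _) (norm_nonneg _), Complex.sq_norm, Complex.sq_norm]
    simp only [normSq_apply, sub_re, sub_im, mul_re, mul_im, ofReal_re, ofReal_im, re_ofNat,
      im_ofNat]
    nlinarith [hg z hz]
  set F : ℂ → ℂ := fun z => g z / (g z - 2 * m)
  have hF : MapsTo F (ball c R) (closedBall (F c) 1) := fun z hz => by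
    rw [show F c = 0 by simp [F, g], mem_closedBall_zero_iff, norm_div]
    exact div_le_one_of_le₀ (hnorm z hz) (norm_nonneg _)
  have hFd : DifferentiableOn ℂ F (ball c R) :=
    (hd.sub_const _).div ((hd.sub_const _).sub_const _) hden
  have hf' : HasDerivAt f (deriv f c) c :=
    (hd.differentiableAt (isOpen_ball.mem_nhds (mem_ball_self hR))).hasDerivAt
  have hF' : HasDerivAt F (deriv f c / -(2 * m)) c := by
    have h := (hf'.sub_const (f c)).div ((hf'.sub_const (f c)).sub_const (2 * (m : ℂ)))
      (hden c (mem_ball_self hR))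
    have hne : -(2 * (m : ℂ)) ≠ 0 := by simp [hm.ne']
    rwa [sub_self, zero_sub, zero_mul, sub_zero, sq, mul_div_mul_right _ _ hne] at h
  have hschwarz := norm_deriv_le_div_of_mapsTo_ball hFd hF hR
  rw [hF'.deriv, norm_div, norm_neg, div_le_div_iff₀ (by simp [hm.ne']) hR] at hschwarz
  rw [le_div_iff₀ hR]
  simpa [abs_of_pos hm] using hschwarz

end Complex

theorem HasDerivAt.fst {𝕜 E F : Type*} [NontriviallyNormedField 𝕜] [NormedAddCommGroup E]
    [NormedSpace 𝕜 E] [NormedAddCommGroup F] [NormedSpace 𝕜 F] {φ : 𝕜 → E × F} {w : E × F}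
    {x : 𝕜} (h : HasDerivAt φ w x) : HasDerivAt (fun z => (φ z).1) w.1 x :=
  (hasFDerivAt_fst (p := φ x)).comp_hasDerivAt x h

theorem HasDerivAt.snd {𝕜 E F : Type*} [NontriviallyNormedField 𝕜] [NormedAddCommGroup E]
    [NormedSpace 𝕜 E] [NormedAddCommGroup F] [NormedSpace 𝕜 F] {φ : 𝕜 → E × F} {w : E × F}
    {x : 𝕜} (h : HasDerivAt φ w x) : HasDerivAt (fun z => (φ z).2) w.2 x :=
  (hasFDerivAt_snd (p := φ x)).comp_hasDerivAt x h

theorem exists_pos_le_mul_add_eq_sq {a ρ : ℝ} (ha : 0 ≤ a) (hρ : 0 < ρ) :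
    ∃ r, 0 < r ∧ r ≤ ρ ∧ r * (a + r) = ρ ^ 2 := by
  obtain ⟨r, ⟨hr0, hrρ⟩, hr⟩ : ρ ^ 2 ∈ (fun r => r * (a + r)) '' Icc 0 ρ :=
    intermediate_value_Icc hρ.le (by fun_prop) ⟨by simp only [zero_mul]; positivity, by nlinarith⟩
  refine ⟨r, hr0.lt_of_ne ?_, hrρ, hr⟩
  rintro rfl
  simp only [zero_mul] at hr
  exact (pow_pos hρ 2).ne hr

theorem norm_fst_mul_le_of_mapsTo_Gpsi {β ρ δ : ℝ} (hβ : 0 < β) (hρ0 : 0 < ρ) (hρ1 : ρ ≤ 1)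
    (hρδ : (ρ ^ 2) ^ β = δ) {φ : ℂ → ℂ × ℂ} (hd : DifferentiableOn ℂ φ (ball 0 1))
    (hm : MapsTo φ (ball 0 1) (Gpsi (· ^ β))) (h0 : φ 0 = pdel δ) {w : ℂ × ℂ}
    (hw : HasDerivAt φ w 0) (hzone : 8 * δ * ‖w.2‖ ≤ ρ ^ 2 * ‖w.1‖) :
    ‖w.1‖ * ρ ≤ 4 * √2 * δ := by
  have hδ : 0 < δ := hρδ ▸ by positivity
  have hsnd : ∀ z ∈ ball (0 : ℂ) 1, ‖(φ z).2‖ ≤ ‖z‖ * (‖w.2‖ + ‖z‖) := fun z hz => by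
    simpa [hw.snd.deriv] using Complex.norm_le_mul_norm_deriv_add hd.snd
      (fun z hz => mem_ball_zero_iff.2 (hm hz).2.1) (by simp [h0, pdel]) hz
  -- the radius on which the Schwarz–Pick bound on `φ₂` keeps `Re φ₁` below `δ`
  obtain ⟨r, hr0, hrρ, hr⟩ := exists_pos_le_mul_add_eq_sq (norm_nonneg w.2) hρ0
  have hball : ball (0 : ℂ) r ⊆ ball 0 1 := ball_subset_ball (hrρ.trans hρ1)
  have hre : ∀ z ∈ ball (0 : ℂ) r, (φ z).1.re < δ := fun z hz => by
    have hzr : ‖z‖ < r := mem_ball_zero_iff.1 hz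
    calc (φ z).1.re < ‖(φ z).2‖ ^ β := (hm (hball hz)).2.2
      _ ≤ (r * (‖w.2‖ + r)) ^ β := by
        gcongr
        exact (hsnd z (hball hz)).trans (by gcongr)
      _ = δ := by rw [hr, hρδ]
  have hLr : ‖w.1‖ * r ≤ 4 * δ := by
    have := Complex.norm_deriv_le_of_re_lt (hd.fst.mono hball) hr0 hre
    rw [hw.fst.deriv, h0, le_div_iff₀ hr0] at this
    simp only [pdel, neg_re, ofReal_re, sub_neg_eq_add] at this
    linarith
  have har : 2 * r * ‖w.2‖ ≤ ρ ^ 2 := by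
    nlinarith [mul_le_mul_of_nonneg_left hLr (sq_nonneg ρ)]
  have hρr : ρ ≤ √2 * r := by
    rw [← Real.sqrt_sq hρ0.le, ← Real.sqrt_sq hr0.le, ← Real.sqrt_mul zero_le_two]
    exact Real.sqrt_le_sqrt (by nlinarith)
  calc ‖w.1‖ * ρ ≤ ‖w.1‖ * (√2 * r) := by gcongr
    _ = √2 * (‖w.1‖ * r) := by ring
    _ ≤ 4 * √2 * δ := by nlinarith [Real.sqrt_nonneg 2]

theorem le_sq_rpow {q β : ℝ} (hq : 1 ≤ q) (hβ : 1 / 2 ≤ β) : q ≤ (q ^ 2) ^ β :=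
  calc q = (q ^ 2) ^ (1 / 2 : ℝ) := by rw [← Real.sqrt_eq_rpow, Real.sqrt_sq (by linarith)]
    _ ≤ (q ^ 2) ^ β := Real.rpow_le_rpow_of_exponent_le (by nlinarith) hβ

theorem sq_rpow_le_self {ρ β : ℝ} (hρ0 : 0 < ρ) (hρ1 : ρ ≤ 1) (hβ : 1 / 2 ≤ β) :
    (ρ ^ 2) ^ β ≤ ρ :=
  calc (ρ ^ 2) ^ β ≤ (ρ ^ 2) ^ (1 / 2 : ℝ) :=
        Real.rpow_le_rpow_of_exponent_ge (by positivity) (by nlinarith) hβ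
    _ = ρ := by rw [← Real.sqrt_eq_rpow, Real.sqrt_sq hρ0.le]

/-- Either `t s < δ`, or `s ≥ 4ρ` is large enough for the term `s² / 4` to win. -/
theorem neg_add_mul_lt_rpow {β ρ δ c t b s y : ℝ} (hβ : 1 / 2 ≤ β) (hρ : 0 < ρ)
    (hρδ : (ρ ^ 2) ^ β = δ) (hc0 : 0 < c) (hc : c ≤ 1 / 4) (ht : t * ρ ≤ c * δ) (hb : 8 * b ≤ c * ρ)
    (hs : 0 ≤ s) (hy0 : 0 ≤ y) (hy : s ^ 2 / 4 - b * s ≤ y) : -δ + t * s < y ^ β := by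
  have hδ : 0 < δ := hρδ ▸ by positivity
  rcases lt_or_ge (t * s) δ with hts | hts
  · linarith [Real.rpow_nonneg hy0 β]
  have hρs : ρ ≤ c * s := by
    nlinarith [mul_le_mul_of_nonneg_right ht hs, mul_le_mul_of_nonneg_right hts hρ.le]
  have hq : 1 ≤ s / (4 * ρ) := (one_le_div (by positivity)).2 (by nlinarith)
  have hys : (s / 4) ^ 2 ≤ y := by
    have h₁ := mul_le_mul_of_nonneg_right hb hs
    have h₂ := mul_le_mul_of_nonneg_right (mul_le_mul_of_nonneg_left hρs hc0.le) hs
    nlinarith [mul_le_mul hc hc hc0.le (by norm_num)]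
  calc -δ + t * s < t * s := by linarith
    _ ≤ s / (4 * ρ) * δ := by
      rw [div_mul_eq_mul_div, le_div_iff₀ (by positivity)]
      nlinarith [mul_le_mul_of_nonneg_right ht hs,
        mul_nonneg (mul_nonneg (sub_nonneg.2 hc) hδ.le) hs]
    _ ≤ ((s / (4 * ρ)) ^ 2) ^ β * δ := by gcongr; exact le_sq_rpow hq hβ
    _ = ((s / 4) ^ 2) ^ β := by
      rw [← hρδ, ← Real.mul_rpow (by positivity) (by positivity), ← mul_pow]
      field_simp
    _ ≤ y ^ β := by gcongr

noncomputable def trialDisc (δ : ℝ) (u v : ℂ) (ζ : ℂ) : ℂ × ℂ := (-δ + u * ζ, v * ζ + ζ ^ 2 / 4)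

theorem trialDisc_zero (δ : ℝ) (u v : ℂ) : trialDisc δ u v 0 = pdel δ := by
  simp [trialDisc, pdel]

theorem differentiable_trialDisc (δ : ℝ) (u v : ℂ) : Differentiable ℂ (trialDisc δ u v) := by
  unfold trialDisc; fun_prop

theorem hasDerivAt_trialDisc (δ : ℝ) (u v : ℂ) : HasDerivAt (trialDisc δ u v) (u, v) 0 := by
  have h₁ : HasDerivAt (fun ζ : ℂ => -(δ : ℂ) + u * ζ) u 0 := by
    simpa using ((hasDerivAt_id (0 : ℂ)).const_mul u).const_add (-(δ : ℂ))
  have h₂ : HasDerivAt (fun ζ : ℂ => v * ζ + ζ ^ 2 / 4) v 0 := by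
    simpa using
      ((hasDerivAt_id (0 : ℂ)).const_mul v).fun_add ((hasDerivAt_pow 2 (0 : ℂ)).div_const 4)
  exact h₁.prodMk h₂

theorem trialDisc_mapsTo_Gpsi {β ρ δ c : ℝ} {u v : ℂ} (hβ : 1 / 2 ≤ β) (hρ0 : 0 < ρ)
    (hρ1 : ρ ≤ 1) (hρδ : (ρ ^ 2) ^ β = δ) (hc0 : 0 < c) (hc : c ≤ 1 / 4) (hδc : δ + c ≤ 1)
    (hu : ‖u‖ * ρ ≤ c * δ) (hv : 8 * ‖v‖ ≤ c * ρ) :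
    MapsTo (trialDisc δ u v) (ball 0 1) (Gpsi (· ^ β)) := by
  intro ζ hζ
  have hs : ‖ζ‖ < 1 := mem_ball_zero_iff.1 hζ
  have hδ : 0 < δ := hρδ ▸ by positivity
  have hδρ : δ ≤ ρ := hρδ ▸ sq_rpow_le_self hρ0 hρ1 hβ
  have hu1 : ‖u‖ ≤ c := le_of_mul_le_mul_right (by nlinarith) hρ0
  have hnorm₁ : ‖-(δ : ℂ) + u * ζ‖ ≤ δ + ‖u‖ * ‖ζ‖ := by
    simpa [abs_of_pos hδ] using norm_add_le (-(δ : ℂ)) (u * ζ)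
  have hnorm₂ : ‖ζ ^ 2 / 4‖ = ‖ζ‖ ^ 2 / 4 := by simp
  refine ⟨?_, ?_, ?_⟩
  · show ‖-(δ : ℂ) + u * ζ‖ < 1
    nlinarith [mul_le_mul_of_nonneg_right hu1 (norm_nonneg ζ), norm_nonneg ζ]
  · show ‖v * ζ + ζ ^ 2 / 4‖ < 1
    have := norm_add_le (v * ζ) (ζ ^ 2 / 4)
    rw [norm_mul, hnorm₂] at this
    nlinarith [norm_nonneg v, norm_nonneg ζ]
  · show (-(δ : ℂ) + u * ζ).re < ‖v * ζ + ζ ^ 2 / 4‖ ^ β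
    have hre : (-(δ : ℂ) + u * ζ).re ≤ -δ + ‖u‖ * ‖ζ‖ := by
      simpa [norm_mul] using re_le_norm (u * ζ)
    have hlow := norm_le_add_norm_add (ζ ^ 2 / 4) (v * ζ)
    rw [hnorm₂, norm_mul, add_comm (ζ ^ 2 / 4)] at hlow
    exact hre.trans_lt (neg_add_mul_lt_rpow hβ hρ0 hρδ hc0 hc hu hv (norm_nonneg ζ) (norm_nonneg _)
      (by linarith))

theorem le_kob_s11 {Ω : Set (ℂ × ℂ)} {z X : ℂ × ℂ} {m : ℝ}
    (hne : ∃ lam : ℝ, 0 < lam ∧ ∃ φ : ℂ → ℂ × ℂ, DifferentiableOn ℂ φ (ball 0 1) ∧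
      MapsTo φ (ball 0 1) Ω ∧ φ 0 = z ∧ deriv φ 0 = lam • X)
    (h : ∀ lam : ℝ, 0 < lam → ∀ φ : ℂ → ℂ × ℂ, DifferentiableOn ℂ φ (ball 0 1) →
      MapsTo φ (ball 0 1) Ω → φ 0 = z → deriv φ 0 = lam • X → lam * m ≤ 1) :
    m ≤ kob Ω z X := by
  obtain ⟨lam, hlam, φ, hφ⟩ := hne
  refine le_csInf ⟨_, lam, hlam, rfl, φ, hφ⟩ ?_
  rintro _ ⟨lam, hlam, rfl, φ, hd, hm, h0, h'⟩
  rw [le_div_iff₀ hlam, mul_comm]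
  exact h lam hlam φ hd hm h0 h'

theorem kob_le {Ω : Set (ℂ × ℂ)} {z X : ℂ × ℂ} {m : ℝ} (hm : 0 ≤ m)
    (h : ∀ lam : ℝ, 0 < lam → lam * m ≤ 1 → ∃ φ : ℂ → ℂ × ℂ, DifferentiableOn ℂ φ (ball 0 1) ∧
      MapsTo φ (ball 0 1) Ω ∧ φ 0 = z ∧ deriv φ 0 = lam • X) :
    kob Ω z X ≤ m := by
  refine le_of_forall_pos_le_add fun ε hε => ?_
  have hlam : 0 < 1 / (m + ε) := by positivity
  obtain ⟨φ, hφ⟩ := h _ hlam (by rw [one_div_mul_eq_div, div_le_one (by positivity)]; linarith)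
  calc kob Ω z X ≤ 1 / (1 / (m + ε)) :=
        csInf_le ⟨0, by rintro _ ⟨l, hl, rfl, -⟩; positivity⟩ ⟨_, hlam, rfl, φ, hφ⟩
    _ = m + ε := one_div_one_div _

section Gpsi

variable {β ρ δ : ℝ} {xN xT : ℂ}

theorem exists_disc_Gpsi {c lam : ℝ} (hβ : 1 / 2 ≤ β) (hρ0 : 0 < ρ) (hρ1 : ρ ≤ 1)
    (hρδ : (ρ ^ 2) ^ β = δ) (hc0 : 0 < c) (hc : c ≤ 1 / 4) (hδc : δ + c ≤ 1)
    (hzone : 8 * δ * ‖xT‖ ≤ ρ ^ 2 * ‖xN‖) (hlam : 0 < lam) (hle : lam * ‖xN‖ * ρ ≤ c * δ) :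
    ∃ φ : ℂ → ℂ × ℂ, DifferentiableOn ℂ φ (ball 0 1) ∧ MapsTo φ (ball 0 1) (Gpsi (· ^ β)) ∧
      φ 0 = pdel δ ∧ deriv φ 0 = lam • (xN, xT) := by
  have hδ : 0 < δ := hρδ ▸ by positivity
  have hT : 8 * ‖lam • xT‖ ≤ c * ρ := by
    rw [norm_smul, Real.norm_of_nonneg hlam.le]
    nlinarith [mul_le_mul_of_nonneg_left hzone hlam.le]
  refine ⟨trialDisc δ (lam • xN) (lam • xT), (differentiable_trialDisc _ _ _).differentiableOn,
    trialDisc_mapsTo_Gpsi hβ hρ0 hρ1 hρδ hc0 hc hδc ?_ hT, trialDisc_zero _ _ _,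
    (hasDerivAt_trialDisc _ _ _).deriv⟩
  rwa [norm_smul, Real.norm_of_nonneg hlam.le]

theorem kob_Gpsi_le {c : ℝ} (hβ : 1 / 2 ≤ β) (hρ0 : 0 < ρ) (hρ1 : ρ ≤ 1)
    (hρδ : (ρ ^ 2) ^ β = δ) (hc0 : 0 < c) (hc : c ≤ 1 / 4) (hδc : δ + c ≤ 1)
    (hzone : 8 * δ * ‖xT‖ ≤ ρ ^ 2 * ‖xN‖) :
    kob (Gpsi (· ^ β)) (pdel δ) (xN, xT) ≤ 1 / c * (ρ / δ) * ‖xN‖ := by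
  have hδ : 0 < δ := hρδ ▸ by positivity
  refine kob_le (by positivity) fun lam hlam hle => ?_
  refine exists_disc_Gpsi hβ hρ0 hρ1 hρδ hc0 hc hδc hzone hlam ?_
  calc lam * ‖xN‖ * ρ = c * δ * (lam * (1 / c * (ρ / δ) * ‖xN‖)) := by field_simp
    _ ≤ c * δ := mul_le_of_le_one_right (by positivity) hle

theorem le_kob_Gpsi (hβ : 1 / 2 ≤ β) (hρ0 : 0 < ρ) (hρ1 : ρ ≤ 1) (hρδ : (ρ ^ 2) ^ β = δ)
    (hδ1 : δ < 1) (hzone : 8 * δ * ‖xT‖ ≤ ρ ^ 2 * ‖xN‖) :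
    1 / (4 * √2) * (ρ / δ) * ‖xN‖ ≤ kob (Gpsi (· ^ β)) (pdel δ) (xN, xT) := by
  have hδ : 0 < δ := hρδ ▸ by positivity
  refine le_kob_s11 ?_ fun lam hlam φ hd hm h0 h' => ?_
  · set c := (1 - δ) / 4 with hc
    have hc0 : 0 < c := by linarith
    have hlam : 0 < c * δ / (‖xN‖ * ρ + 1) := by positivity
    refine ⟨_, hlam, exists_disc_Gpsi hβ hρ0 hρ1 hρδ hc0 (by linarith) (by linarith) hzone hlam ?_⟩
    calc c * δ / (‖xN‖ * ρ + 1) * ‖xN‖ * ρ = c * δ * (‖xN‖ * ρ / (‖xN‖ * ρ + 1)) := by ring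
      _ ≤ c * δ := mul_le_of_le_one_right (by positivity)
        (div_le_one_of_le₀ (by linarith) (by positivity))
  · have hw : HasDerivAt φ (lam • (xN, xT)) 0 :=
      h' ▸ (hd.differentiableAt (ball_mem_nhds 0 one_pos)).hasDerivAt
    have := norm_fst_mul_le_of_mapsTo_Gpsi (by linarith) hρ0 hρ1 hρδ hd hm h0 hw (by
      simp only [Prod.smul_fst, Prod.smul_snd, norm_smul, Real.norm_of_nonneg hlam.le]
      nlinarith [mul_le_mul_of_nonneg_left hzone hlam.le])
    simp only [Prod.smul_fst, norm_smul, Real.norm_of_nonneg hlam.le] at this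
    calc lam * (1 / (4 * √2) * (ρ / δ) * ‖xN‖) = lam * ‖xN‖ * ρ / (4 * √2 * δ) := by
          field_simp
      _ ≤ 1 := div_le_one_of_le₀ this (by positivity)

end Gpsi

theorem sq_rpow_one_div_two_mul (δ β : ℝ) (hδ : 0 ≤ δ) :
    (δ ^ (1 / (2 * β))) ^ 2 = δ ^ (1 / β) := by
  rw [← Real.rpow_two, ← Real.rpow_mul hδ]
  ring_nf

/-- for `ψ(x) = x^β`, `β > 1`, in the zone `|x_T| ≤ (1/8)δ^{1/β−1}|x_N|`
the metric is comparable to `δ^{1/(2β)−1}|x_N|`, with explicit lower constant `1/(4√2)`. -/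
theorem stmt11 (β : ℝ) (hβ : 1 < β) :
    ∀ δ₀ ∈ Ioo (0 : ℝ) 1, ∃ C : ℝ, 0 < C ∧
      ∀ δ ∈ Ioc (0 : ℝ) δ₀, ∀ xN xT : ℂ,
        ‖xT‖ ≤ (1 / 8) * δ ^ (1 / β - 1) * ‖xN‖ →
        (1 / (4 * Real.sqrt 2)) * δ ^ (1 / (2 * β) - 1) * ‖xN‖ ≤
            kob (Gpsi (fun x => x ^ β)) (pdel δ) (xN, xT) ∧
        kob (Gpsi (fun x => x ^ β)) (pdel δ) (xN, xT) ≤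
            C * δ ^ (1 / (2 * β) - 1) * ‖xN‖ := by
  rintro δ₀ ⟨hδ₀0, hδ₀1⟩
  have hc0 : 0 < (1 - δ₀) / 4 := by linarith
  refine ⟨1 / ((1 - δ₀) / 4), by positivity, ?_⟩
  rintro δ ⟨hδ0, hδδ₀⟩ xN xT hzone
  set ρ := δ ^ (1 / (2 * β))
  have hρ2 : ρ ^ 2 = δ ^ (1 / β) := sq_rpow_one_div_two_mul δ β hδ0.le
  have hρδ : (ρ ^ 2) ^ β = δ := by
    rw [hρ2, ← Real.rpow_mul hδ0.le, one_div_mul_cancel (by positivity), Real.rpow_one]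
  have hρ1 : ρ ≤ 1 := Real.rpow_le_one hδ0.le (by linarith) (by positivity)
  have hzone' : 8 * δ * ‖xT‖ ≤ ρ ^ 2 * ‖xN‖ := by
    rw [Real.rpow_sub_one hδ0.ne', ← hρ2] at hzone
    calc 8 * δ * ‖xT‖ ≤ 8 * δ * (1 / 8 * (ρ ^ 2 / δ) * ‖xN‖) := by gcongr
      _ = ρ ^ 2 * ‖xN‖ := by field_simp
  rw [Real.rpow_sub_one hδ0.ne']
  exact ⟨le_kob_Gpsi (by linarith) (by positivity) hρ1 hρδ (by linarith) hzone',
    kob_Gpsi_le (by linarith) (by positivity) hρ1 hρδ hc0 (by linarith) (by linarith) hzone'⟩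
end
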